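/- For all l ∈ [0, π_2/2], cleaf_2(l)² = cos(2θ(l)) where θ(l) = ∫_0^l cleaf_2(t) dt. -/

import Mathlib

/-!
Write `arccleaf y = ∫_y^1 dt/√(1-t⁴)`, so that `cleaf` inverts it. Substituting `l = arccleaf y`,
the claim becomes `2 ∫_0^{arccleaf y} cleaf = arccos (y²)` for `y ∈ [0, 1]`. Both sides vanish
at `y = 1`, and on `(0, 1)` both have derivative `-2y/√(1-y⁴)`: on the left by the chain rule and
`cleaf (arccleaf y) = y`, on the right by differentiating `arccos`. The fundamental theorem of
calculus on the left needs `cleaf` to be continuous, which holds because it is monotone and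
maps an interval onto an interval.
-/

open MeasureTheory intervalIntegral Set Real Topology

noncomputable def arccleaf (y : ℝ) : ℝ := ∫ t in y..1, 1 / √(1 - t ^ 4)

lemma one_sub_pow_four_pos {y : ℝ} (hy : y ∈ Ioo (-1 : ℝ) 1) : 0 < 1 - y ^ 4 := by
  have : y ^ 2 < 1 := by nlinarith [hy.1, hy.2]
  nlinarith [sq_nonneg y]

lemma intervalIntegrable_one_div_sqrt_one_sub_pow_four :
    IntervalIntegrable (fun t : ℝ => 1 / √(1 - t ^ 4)) volume 0 1 := by
  have hdom : IntervalIntegrable (fun t : ℝ => (1 - t) ^ (-(1 / 2) : ℝ)) volume 0 1 := by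
    simpa using (intervalIntegrable_rpow' (a := 1) (b := 0)
      (by norm_num : (-1 : ℝ) < -(1 / 2))).comp_sub_left 1
  refine hdom.mono_fun (Measurable.aestronglyMeasurable (by fun_prop)) ?_
  filter_upwards [ae_restrict_mem measurableSet_uIoc] with t ht
  rw [uIoc_of_le zero_le_one] at ht
  have hsq : (1 - t) ^ (-(1 / 2) : ℝ) = 1 / √(1 - t) := by
    rw [rpow_neg (by linarith [ht.2]), sqrt_eq_rpow, one_div, one_div]
  rw [norm_of_nonneg (by positivity), norm_of_nonneg (rpow_nonneg (by linarith [ht.2]) _), hsq]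
  rcases ht.2.eq_or_lt with rfl | ht1
  · simp
  · have := sqrt_pos.2 (sub_pos.2 ht1)
    gcongr
    exact pow_le_of_le_one ht.1.le ht.2 (by norm_num)

lemma arccleaf_one : arccleaf 1 = 0 := integral_same

lemma continuousOn_arccleaf : ContinuousOn arccleaf (Icc 0 1) := by
  have h := (intervalIntegrable_iff_integrableOn_Icc_of_le zero_le_one).1
    intervalIntegrable_one_div_sqrt_one_sub_pow_four
  rw [← uIcc_of_le zero_le_one] at h ⊢
  exact continuousOn_primitive_interval_left h

lemma hasDerivAt_arccleaf {y : ℝ} (hy : y ∈ Ioo (0 : ℝ) 1) :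
    HasDerivAt arccleaf (-(1 / √(1 - y ^ 4))) y := by
  have hpos := one_sub_pow_four_pos ⟨by linarith [hy.1], hy.2⟩
  refine integral_hasDerivAt_left
    (intervalIntegrable_one_div_sqrt_one_sub_pow_four.mono_set (by
      rw [uIcc_of_le hy.2.le, uIcc_of_le zero_le_one]
      exact Icc_subset_Icc_left hy.1.le))
    (Measurable.stronglyMeasurable (by fun_prop)).stronglyMeasurableAtFilter ?_
  exact continuousAt_const.div (by fun_prop) (sqrt_pos.2 hpos).ne'

lemma strictAntiOn_arccleaf : StrictAntiOn arccleaf (Icc 0 1) := by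
  refine strictAntiOn_of_deriv_neg (convex_Icc 0 1) continuousOn_arccleaf fun y hy => ?_
  rw [interior_Icc] at hy
  rw [(hasDerivAt_arccleaf hy).deriv, neg_lt_zero]
  have := one_sub_pow_four_pos ⟨by linarith [hy.1], hy.2⟩
  positivity

lemma mapsTo_arccleaf : MapsTo arccleaf (Icc 0 1) (Icc 0 (arccleaf 0)) := fun _ hy =>
  ⟨arccleaf_one ▸ strictAntiOn_arccleaf.antitoneOn hy (right_mem_Icc.2 zero_le_one) hy.2,
    strictAntiOn_arccleaf.antitoneOn (left_mem_Icc.2 zero_le_one) hy hy.1⟩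

lemma hasDerivAt_arccos_sq {y : ℝ} (hy : y ∈ Ioo (-1 : ℝ) 1) :
    HasDerivAt (fun y => arccos (y ^ 2)) (-(2 * y / √(1 - y ^ 4))) y := by
  have hy2 : y ^ 2 < 1 := by nlinarith [hy.1, hy.2]
  refine ((hasDerivAt_arccos (by nlinarith) hy2.ne).comp (h := fun y : ℝ => y ^ 2) y
    (hasDerivAt_pow 2 y)).congr_deriv ?_
  rw [← pow_mul]
  push_cast
  ring

theorem continuousAt_of_antitoneOn_of_image_mem_nhds {α β : Type*} [LinearOrder α]
    [TopologicalSpace α] [OrderTopology α] [LinearOrder β] [TopologicalSpace β] [OrderTopology β]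
    [DenselyOrdered β] {f : α → β} {s : Set α} {a : α} (h_anti : AntitoneOn f s) (hs : s ∈ 𝓝 a)
    (hfs : f '' s ∈ 𝓝 (f a)) : ContinuousAt f a :=
  continuousAt_of_monotoneOn_of_image_mem_nhds (β := βᵒᵈ) h_anti.dual_right hs hfs

lemma hasDerivAt_integral_of_continuousOn_Ioo {c : ℝ → ℝ} {a b x : ℝ}
    (hint : IntervalIntegrable c volume a x) (hcont : ContinuousOn c (Ioo a b)) (hx : x ∈ Ioo a b) :
    HasDerivAt (fun u => ∫ t in a..u, c t) (c x) x :=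
  integral_hasDerivAt_right hint (hcont.stronglyMeasurableAtFilter isOpen_Ioo x hx)
    (hcont.continuousAt (Ioo_mem_nhds hx.1 hx.2))

section InverseOfArccleaf

variable {c : ℝ → ℝ}

lemma leftInvOn_of_rightInvOn_arccleaf (hmaps : MapsTo c (Icc 0 (arccleaf 0)) (Icc 0 1))
    (hinv : RightInvOn c arccleaf (Icc 0 (arccleaf 0))) : LeftInvOn c arccleaf (Icc 0 1) :=
  strictAntiOn_arccleaf.injOn.rightInvOn_of_leftInvOn hinv mapsTo_arccleaf hmaps

lemma antitoneOn_of_rightInvOn_arccleaf (hmaps : MapsTo c (Icc 0 (arccleaf 0)) (Icc 0 1))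
    (hinv : RightInvOn c arccleaf (Icc 0 (arccleaf 0))) : AntitoneOn c (Icc 0 (arccleaf 0)) :=
  Function.antitoneOn_of_rightInvOn_of_mapsTo strictAntiOn_arccleaf.antitoneOn hinv hmaps

lemma continuousOn_of_rightInvOn_arccleaf (hmaps : MapsTo c (Icc 0 (arccleaf 0)) (Icc 0 1))
    (hinv : RightInvOn c arccleaf (Icc 0 (arccleaf 0))) : ContinuousOn c (Ioo 0 (arccleaf 0)) := by
  have hbij : BijOn c (Icc 0 (arccleaf 0)) (Icc 0 1) :=
    InvOn.bijOn ⟨hinv, leftInvOn_of_rightInvOn_arccleaf hmaps hinv⟩ hmaps mapsTo_arccleaf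
  refine fun l hl => (continuousAt_of_antitoneOn_of_image_mem_nhds
    (antitoneOn_of_rightInvOn_arccleaf hmaps hinv) (Icc_mem_nhds hl.1 hl.2) ?_).continuousWithinAt
  have hl' : l ∈ Icc 0 (arccleaf 0) := Ioo_subset_Icc_self hl
  have hc0 : c l ≠ 0 := fun h => hl.2.ne (by rw [← hinv hl', h])
  have hc1 : c l ≠ 1 := fun h => hl.1.ne' (by rw [← hinv hl', h, arccleaf_one])
  rw [hbij.image_eq]
  exact Icc_mem_nhds ((hmaps hl').1.lt_of_ne' hc0) ((hmaps hl').2.lt_of_ne hc1)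

lemma hasDerivAt_integral_comp_arccleaf (hmaps : MapsTo c (Icc 0 (arccleaf 0)) (Icc 0 1))
    (hinv : RightInvOn c arccleaf (Icc 0 (arccleaf 0))) {y : ℝ} (hy : y ∈ Ioo (0 : ℝ) 1) :
    HasDerivAt (fun y => ∫ t in (0 : ℝ)..arccleaf y, c t) (-(y / √(1 - y ^ 4))) y := by
  have hy' : arccleaf y ∈ Ioo 0 (arccleaf 0) := by
    have hmem : y ∈ Icc (0 : ℝ) 1 := Ioo_subset_Icc_self hy
    exact ⟨arccleaf_one ▸ strictAntiOn_arccleaf hmem (right_mem_Icc.2 zero_le_one) hy.2,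
      strictAntiOn_arccleaf (left_mem_Icc.2 zero_le_one) hmem hy.1⟩
  have hint : IntervalIntegrable c volume 0 (arccleaf y) :=
    ((antitoneOn_of_rightInvOn_arccleaf hmaps hinv).mono (by
      rw [uIcc_of_le hy'.1.le]
      exact Icc_subset_Icc_right hy'.2.le)).intervalIntegrable
  have hθ := hasDerivAt_integral_of_continuousOn_Ioo hint
    (continuousOn_of_rightInvOn_arccleaf hmaps hinv) hy'
  rw [leftInvOn_of_rightInvOn_arccleaf hmaps hinv (Ioo_subset_Icc_self hy)] at hθ
  exact (hθ.comp y (hasDerivAt_arccleaf hy)).congr_deriv (by ring)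

theorem two_mul_integral_arccleaf_eq_arccos (hmaps : MapsTo c (Icc 0 (arccleaf 0)) (Icc 0 1))
    (hinv : RightInvOn c arccleaf (Icc 0 (arccleaf 0))) {y : ℝ} (hy : y ∈ Icc (0 : ℝ) 1) :
    2 * ∫ t in (0 : ℝ)..arccleaf y, c t = arccos (y ^ 2) := by
  set D : ℝ → ℝ := fun y => 2 * (∫ t in (0 : ℝ)..arccleaf y, c t) - arccos (y ^ 2)
  have hθ : ContinuousOn (fun u => ∫ t in (0 : ℝ)..u, c t) (Icc 0 (arccleaf 0)) := by
    have hanti := antitoneOn_of_rightInvOn_arccleaf hmaps hinv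
    rw [← uIcc_of_le (mapsTo_arccleaf (left_mem_Icc.2 zero_le_one)).1] at hanti ⊢
    exact continuousOn_primitive_interval' hanti.intervalIntegrable left_mem_uIcc
  have hD_cont : ContinuousOn D (Icc 0 1) :=
    (continuousOn_const.mul (hθ.comp continuousOn_arccleaf mapsTo_arccleaf)).sub
      (continuous_arccos.comp (continuous_pow 2)).continuousOn
  have hD_deriv : ∀ x ∈ Ioo (0 : ℝ) 1, HasDerivAt D 0 x := fun x hx =>
    (((hasDerivAt_integral_comp_arccleaf hmaps hinv hx).const_mul 2).sub
      (hasDerivAt_arccos_sq ⟨by linarith [hx.1], hx.2⟩)).congr_deriv (by ring)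
  have hD_one : D 1 = 0 := by simp [D, arccleaf_one]
  have hD : D 1 - D y = 0 := by
    rw [← integral_eq_sub_of_hasDerivAt_of_le hy.2 (hD_cont.mono (Icc_subset_Icc_left hy.1))
      (fun x hx => hD_deriv x ⟨hy.1.trans_lt hx.1, hx.2⟩) intervalIntegrable_const, intervalIntegral.integral_zero]
  exact sub_eq_zero.1 (by linarith : D y = 0)

end InverseOfArccleaf

theorem cleaf_sq_eq_cos (π₂ : ℝ) (hπ : π₂ = 2 * ∫ t in (0:ℝ)..1, 1 / Real.sqrt (1 - t ^ 4))
    (cleaf : ℝ → ℝ)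
    (hc : ∀ l ∈ Set.Icc 0 (π₂ / 2), cleaf l ∈ Set.Icc (0:ℝ) 1 ∧
      (∫ t in (cleaf l)..1, 1 / Real.sqrt (1 - t ^ 4)) = l) :
    ∀ l ∈ Set.Icc 0 (π₂ / 2),
      (cleaf l) ^ 2 = Real.cos (2 * ∫ t in (0:ℝ)..l, cleaf t) := by
  have hL : π₂ / 2 = arccleaf 0 := by rw [hπ, arccleaf]; ring
  rw [hL] at hc ⊢
  intro l hl
  obtain ⟨hcl, hinv⟩ : cleaf l ∈ Icc 0 1 ∧ arccleaf (cleaf l) = l := hc l hl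
  have hθ := two_mul_integral_arccleaf_eq_arccos (fun l hl => (hc l hl).1)
    (fun l hl => (hc l hl).2) hcl
  rw [hinv] at hθ
  rw [hθ, cos_arccos (by nlinarith [hcl.1]) (by nlinarith [hcl.1, hcl.2])]
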